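/- The formula G(p₁ ∨ G(p₂)) is not definable in LTLEBR: there exists no LTLEBR formula ψ over Σ = {p₁,p₂} such that L(ψ) = L(G(p₁ ∨ G(p₂))). -/

import Mathlib

/-- Syntax of LTL with Past (LTL+P) over proposition letters of type `α`. -/
inductive Formula (α : Type) : Type
  | atom  : α → Formula α                       -- proposition letter
  | not   : Formula α → Formula α               -- ¬
  | or    : Formula α → Formula α → Formula α   -- ∨
  | and   : Formula α → Formula α → Formula α   -- ∧
  | next  : Formula α → Formula α               -- X
  | untl  : Formula α → Formula α → Formula α   -- U
  | rels  : Formula α → Formula α → Formula α   -- R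
  | ev    : Formula α → Formula α               -- F
  | glob  : Formula α → Formula α               -- G
  | yest  : Formula α → Formula α               -- Y
  | wyest : Formula α → Formula α               -- Z
  | since : Formula α → Formula α → Formula α   -- S
  | trig  : Formula α → Formula α → Formula α   -- T
  | once  : Formula α → Formula α               -- O
  | hist  : Formula α → Formula α               -- H

namespace Formula

/-- Satisfaction `σ, i ⊨ φ` of an LTL+P formula by a state sequence
(an infinite word `σ : ℕ → Set α`) at position `i`. -/
def Sat {α : Type} (σ : ℕ → Set α) : Formula α → ℕ → Prop
  | .atom p, i => p ∈ σ i
  | .not φ, i => ¬ Sat σ φ i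
  | .or φ ψ, i => Sat σ φ i ∨ Sat σ ψ i
  | .and φ ψ, i => Sat σ φ i ∧ Sat σ ψ i
  | .next φ, i => Sat σ φ (i + 1)
  | .untl φ ψ, i => ∃ j, i ≤ j ∧ Sat σ ψ j ∧ ∀ k, i ≤ k → k < j → Sat σ φ k
  | .rels φ ψ, i => (∀ j, i ≤ j → Sat σ ψ j) ∨
      (∃ n, i ≤ n ∧ Sat σ φ n ∧ ∀ m, i ≤ m → m ≤ n → Sat σ ψ m)
  | .ev φ, i => ∃ j, i ≤ j ∧ Sat σ φ j
  | .glob φ, i => ∀ j, i ≤ j → Sat σ φ j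
  | .yest φ, i => 0 < i ∧ Sat σ φ (i - 1)
  | .wyest φ, i => i = 0 ∨ Sat σ φ (i - 1)
  | .since φ ψ, i => ∃ j, j ≤ i ∧ Sat σ ψ j ∧ ∀ k, j < k → k ≤ i → Sat σ φ k
  | .trig φ ψ, i => (∀ j, j ≤ i → Sat σ ψ j) ∨
      (∃ n, n ≤ i ∧ Sat σ φ n ∧ ∀ m, n ≤ m → m ≤ i → Sat σ ψ m)
  | .once φ, i => ∃ j, j ≤ i ∧ Sat σ φ j
  | .hist φ, i => ∀ j, j ≤ i → Sat σ φ j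

/-- The ω-language of a formula: the set of state sequences satisfying it at position 0. -/
def Lang {α : Type} (φ : Formula α) : Set (ℕ → Set α) := {σ | Sat σ φ 0}

end Formula

open Formula

/-- `σ_{[0,i]} · σ'` : the infinite word whose first `i+1` letters come from `σ`
and which then continues as `σ'`. -/
def extendPrefix {α : Type} (σ : ℕ → Set α) (i : ℕ) (σ' : ℕ → Set α) : ℕ → Set α :=
  fun n => if n ≤ i then σ n else σ' (n - (i + 1))

/-- `L` is a safety ω-language: every word not in `L` has a finite prefix all of whose
infinite extensions are not in `L`. -/
def IsSafety {α : Type} (L : Set (ℕ → Set α)) : Prop :=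
  ∀ σ : ℕ → Set α, σ ∉ L → ∃ i : ℕ, ∀ σ' : ℕ → Set α, extendPrefix σ i σ' ∉ L

/-- `X^n φ`. -/
def nextPow {α : Type} : ℕ → Formula α → Formula α
  | 0, φ => φ
  | n + 1, φ => .next (nextPow n φ)

/-- `⋀_{j=0}^{n} X^j φ`. -/
def nextChain {α : Type} (φ : Formula α) : ℕ → Formula α
  | 0 => φ
  | n + 1 => .and (nextChain φ n) (nextPow (n + 1) φ)

/-- The `i`-th disjunct of the bounded until: `X^i ψ₂ ∧ ⋀_{j=0}^{i-1} X^j ψ₁`. -/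
def buntilTerm {α : Type} (ψ₁ ψ₂ : Formula α) : ℕ → Formula α
  | 0 => ψ₂
  | n + 1 => .and (nextPow (n + 1) ψ₂) (nextChain ψ₁ n)

/-- Bounded until `ψ₁ U^[a,b] ψ₂ = ⋁_{i=a}^{b} (X^i ψ₂ ∧ ⋀_{j=0}^{i-1} X^j ψ₁)`. -/
def buntil {α : Type} (a b : ℕ) (ψ₁ ψ₂ : Formula α) : Formula α :=
  ((List.range' (a + 1) (b - a)).map (buntilTerm ψ₁ ψ₂)).foldl .or (buntilTerm ψ₁ ψ₂ a)

/-- Pure past layer of LTLEBR+P : `η ::= p | ¬η | η∨η | Yη | ηSη`. -/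
inductive PurePastL {α : Type} : Formula α → Prop
  | atom (p : α) : PurePastL (.atom p)
  | not {φ} : PurePastL φ → PurePastL (.not φ)
  | or {φ ψ} : PurePastL φ → PurePastL ψ → PurePastL (.or φ ψ)
  | yest {φ} : PurePastL φ → PurePastL (.yest φ)
  | since {φ ψ} : PurePastL φ → PurePastL ψ → PurePastL (.since φ ψ)

/-- Bounded future layer over a base: `ψ ::= base | ¬ψ | ψ∨ψ | Xψ | ψ U^[a,b] ψ`. -/
inductive BFLayer {α : Type} (base : Formula α → Prop) : Formula α → Prop
  | base {φ} : base φ → BFLayer base φ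
  | not {φ} : BFLayer base φ → BFLayer base (.not φ)
  | or {φ ψ} : BFLayer base φ → BFLayer base ψ → BFLayer base (.or φ ψ)
  | next {φ} : BFLayer base φ → BFLayer base (.next φ)
  | bu (a b : ℕ) {φ ψ} : BFLayer base φ → BFLayer base ψ → BFLayer base (buntil a b φ ψ)

/-- Future layer: `φ ::= ψ | φ∧φ | Xφ | Gφ | ψRφ`. -/
inductive FLayer {α : Type} (base : Formula α → Prop) : Formula α → Prop
  | bf {φ} : BFLayer base φ → FLayer base φ
  | and {φ ψ} : FLayer base φ → FLayer base ψ → FLayer base (.and φ ψ)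
  | next {φ} : FLayer base φ → FLayer base (.next φ)
  | glob {φ} : FLayer base φ → FLayer base (.glob φ)
  | rels {φ ψ} : BFLayer base φ → FLayer base ψ → FLayer base (.rels φ ψ)

/-- Boolean layer: `χ ::= φ | χ∨χ | χ∧χ`. -/
inductive BLayer {α : Type} (base : Formula α → Prop) : Formula α → Prop
  | f {φ} : FLayer base φ → BLayer base φ
  | or {φ ψ} : BLayer base φ → BLayer base ψ → BLayer base (.or φ ψ)
  | and {φ ψ} : BLayer base φ → BLayer base ψ → BLayer base (.and φ ψ)

/-- LTLEBR+P formulas: layered grammar whose innermost layer is the pure past layer. -/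
def IsLTLEBRP {α : Type} (φ : Formula α) : Prop := BLayer PurePastL φ

/-- LTLEBR formulas: LTLEBR+P without the pure past layer
(the bounded future layer starts from proposition letters). -/
def IsLTLEBR {α : Type} (φ : Formula α) : Prop :=
  BLayer (fun ψ => ∃ p, ψ = Formula.atom p) φ

/-- Formulas with no past operators (pure future LTL). -/
def FutureOnly {α : Type} : Formula α → Prop
  | .atom _ => True
  | .not φ => FutureOnly φ
  | .or φ ψ => FutureOnly φ ∧ FutureOnly ψ
  | .and φ ψ => FutureOnly φ ∧ FutureOnly ψ
  | .next φ => FutureOnly φ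
  | .untl φ ψ => FutureOnly φ ∧ FutureOnly ψ
  | .rels φ ψ => FutureOnly φ ∧ FutureOnly ψ
  | .ev φ => FutureOnly φ
  | .glob φ => FutureOnly φ
  | .yest _ => False
  | .wyest _ => False
  | .since _ _ => False
  | .trig _ _ => False
  | .once _ => False
  | .hist _ => False

/-- Negated normal form: `nnf b φ` is the NNF of `φ` if `b = false`, of `¬φ` if `b = true`. -/
def nnf {α : Type} : Bool → Formula α → Formula α
  | false, .atom p => .atom p
  | true, .atom p => .not (.atom p)
  | b, .not φ => nnf (!b) φ
  | false, .or φ ψ => .or (nnf false φ) (nnf false ψ)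
  | true, .or φ ψ => .and (nnf true φ) (nnf true ψ)
  | false, .and φ ψ => .and (nnf false φ) (nnf false ψ)
  | true, .and φ ψ => .or (nnf true φ) (nnf true ψ)
  | b, .next φ => .next (nnf b φ)
  | false, .untl φ ψ => .untl (nnf false φ) (nnf false ψ)
  | true, .untl φ ψ => .rels (nnf true φ) (nnf true ψ)
  | false, .rels φ ψ => .rels (nnf false φ) (nnf false ψ)
  | true, .rels φ ψ => .untl (nnf true φ) (nnf true ψ)
  | false, .ev φ => .ev (nnf false φ)
  | true, .ev φ => .glob (nnf true φ)
  | false, .glob φ => .glob (nnf false φ)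
  | true, .glob φ => .ev (nnf true φ)
  | false, .yest φ => .yest (nnf false φ)
  | true, .yest φ => .wyest (nnf true φ)
  | false, .wyest φ => .wyest (nnf false φ)
  | true, .wyest φ => .yest (nnf true φ)
  | false, .since φ ψ => .since (nnf false φ) (nnf false ψ)
  | true, .since φ ψ => .trig (nnf true φ) (nnf true ψ)
  | false, .trig φ ψ => .trig (nnf false φ) (nnf false ψ)
  | true, .trig φ ψ => .since (nnf true φ) (nnf true ψ)
  | false, .once φ => .once (nnf false φ)
  | true, .once φ => .hist (nnf true φ)
  | false, .hist φ => .hist (nnf false φ)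
  | true, .hist φ => .once (nnf true φ)

/-- The formula contains no until (`U`) and no eventually (`F`) operator. -/
def NoUF {α : Type} : Formula α → Prop
  | .atom _ => True
  | .not φ => NoUF φ
  | .or φ ψ => NoUF φ ∧ NoUF ψ
  | .and φ ψ => NoUF φ ∧ NoUF ψ
  | .next φ => NoUF φ
  | .untl _ _ => False
  | .rels φ ψ => NoUF φ ∧ NoUF ψ
  | .ev _ => False
  | .glob φ => NoUF φ
  | .yest φ => NoUF φ
  | .wyest φ => NoUF φ
  | .since φ ψ => NoUF φ ∧ NoUF ψ
  | .trig φ ψ => NoUF φ ∧ NoUF ψ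
  | .once φ => NoUF φ
  | .hist φ => NoUF φ

/-- safetyLTL: pure-future LTL formulas whose negated normal form
contains no `U` and no `F`. -/
def IsSafetyLTL {α : Type} (φ : Formula α) : Prop :=
  FutureOnly φ ∧ NoUF (nnf false φ)

/-- LTLBP (bounded past LTL): Boolean combinations of proposition letters
and yesterday operators. -/
inductive IsLTLBP {α : Type} : Formula α → Prop
  | atom (p : α) : IsLTLBP (.atom p)
  | not {φ} : IsLTLBP φ → IsLTLBP (.not φ)
  | or {φ ψ} : IsLTLBP φ → IsLTLBP ψ → IsLTLBP (.or φ ψ)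
  | and {φ ψ} : IsLTLBP φ → IsLTLBP ψ → IsLTLBP (.and φ ψ)
  | yest {φ} : IsLTLBP φ → IsLTLBP (.yest φ)

/-- Temporal depth `D` of an LTLBP formula. -/
def depth {α : Type} : Formula α → ℕ
  | .not φ => depth φ
  | .or φ ψ => max (depth φ) (depth ψ)
  | .and φ ψ => max (depth φ) (depth ψ)
  | .yest φ => depth φ + 1
  | _ => 0

/-- canLTLEBR: the canonical form of LTLEBR, i.e. `∧/∨`-combinations of formulas
`X^n α`, `X^n G α`, `X^n (α R β)` with `α, β` LTLBP formulas. -/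
inductive IsCanLTLEBR {α : Type} : Formula α → Prop
  | bp {φ} (n : ℕ) : IsLTLBP φ → IsCanLTLEBR (nextPow n φ)
  | glob {φ} (n : ℕ) : IsLTLBP φ → IsCanLTLEBR (nextPow n (.glob φ))
  | rels {φ ψ} (n : ℕ) : IsLTLBP φ → IsLTLBP ψ → IsCanLTLEBR (nextPow n (.rels φ ψ))
  | and {φ ψ} : IsCanLTLEBR φ → IsCanLTLEBR ψ → IsCanLTLEBR (.and φ ψ)
  | or {φ ψ} : IsCanLTLEBR φ → IsCanLTLEBR ψ → IsCanLTLEBR (.or φ ψ)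

/-- Maximum number of nested next (`X`) operators (for canonical-form formulas). -/
def nextDepth {α : Type} : Formula α → ℕ
  | .next φ => nextDepth φ + 1
  | .not φ => nextDepth φ
  | .or φ ψ => max (nextDepth φ) (nextDepth ψ)
  | .and φ ψ => max (nextDepth φ) (nextDepth ψ)
  | .glob φ => nextDepth φ
  | .rels φ ψ => max (nextDepth φ) (nextDepth ψ)
  | .yest φ => nextDepth φ
  | _ => 0

/-- Maximum temporal depth among LTLBP subformulas (for canonical-form formulas). -/
def bpDepth {α : Type} : Formula α → ℕ
  | .next φ => bpDepth φ
  | .glob φ => depth φ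
  | .rels φ ψ => max (depth φ) (depth ψ)
  | .and φ ψ => max (bpDepth φ) (bpDepth ψ)
  | .or φ ψ => max (bpDepth φ) (bpDepth ψ)
  | φ => depth φ

/-- The interval `σ_{[n-d, n]}` of `σ`, as a finite word: it starts at
`max (n-d) 0` and ends at `n`. -/
def window {α : Type} (σ : ℕ → Set α) (d n : ℕ) : List (Set α) :=
  (List.range (min d n + 1)).map (fun t => σ (n - min d n + t))

/-- A pure past formula: all of its temporal operators are past operators. -/
def IsPurePast {α : Type} : Formula α → Prop
  | .atom _ => True
  | .not φ => IsPurePast φ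
  | .or φ ψ => IsPurePast φ ∧ IsPurePast ψ
  | .and φ ψ => IsPurePast φ ∧ IsPurePast ψ
  | .next _ => False
  | .untl _ _ => False
  | .rels _ _ => False
  | .ev _ => False
  | .glob _ => False
  | .yest φ => IsPurePast φ
  | .wyest φ => IsPurePast φ
  | .since φ ψ => IsPurePast φ ∧ IsPurePast ψ
  | .trig φ ψ => IsPurePast φ ∧ IsPurePast ψ
  | .once φ => IsPurePast φ
  | .hist φ => IsPurePast φ

/-- The two-letter alphabet Σ = {p₁, p₂}. -/
inductive PP : Type
  | p1 : PP
  | p2 : PP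
deriving DecidableEq

/-- The state sequence `^{i,k}σ^j`: its `h`-th state is `{p₁}` if `h ∈ {i,k}`,
`{p₂}` if `h = j`, and `{p₁,p₂}` otherwise. -/
def sig (i k j : ℕ) : ℕ → Set PP := fun h =>
  if h = i ∨ h = k then {PP.p1} else if h = j then {PP.p2} else {PP.p1, PP.p2}

/-- The formula `G (p₁ ∨ G p₂)`. -/
def phiG : Formula PP :=
  .glob (.or (.atom PP.p1) (.glob (.atom PP.p2)))

/-! Outside `G` and `R`, an LTLEBR formula only looks a bounded distance ahead, and `G`, `R`
ask a bounded-future formula to hold on a whole suffix, or on an interval ended by a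
bounded-future witness. Let `goodWord D = sig D D (2D+1) ∈ L(φ_G)` and
`badWord D = sig D (4D+3) (2D+1) ∉ L(φ_G)`; they differ only at `4D+3`. A window of radius
`D` of `badWord D` around `4D+3` equals one of `goodWord D` around `D`, and `goodWord D` is
constant beyond `2D+1`. Hence, by induction on the future layer, satisfaction of a formula
of look-ahead `k ≤ D` on a suffix starting at most at `D - k`, or on an interval ending at
most at `3D+2 - k`, transfers from `goodWord D` to `badWord D`: a release witness beyond that bound
is moved back to it. -/

namespace Formula

variable {α : Type}

inductive IsBoolNext : Formula α → Prop
  | atom (p : α) : IsBoolNext (.atom p)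
  | not {φ} : IsBoolNext φ → IsBoolNext (.not φ)
  | or {φ ψ} : IsBoolNext φ → IsBoolNext ψ → IsBoolNext (.or φ ψ)
  | and {φ ψ} : IsBoolNext φ → IsBoolNext ψ → IsBoolNext (.and φ ψ)
  | next {φ} : IsBoolNext φ → IsBoolNext (.next φ)

namespace IsBoolNext

variable {φ ψ : Formula α}

theorem nextPow (h : IsBoolNext φ) (n : ℕ) : IsBoolNext (_root_.nextPow n φ) := by
  induction n with
  | zero => exact h
  | succ n ih => exact .next ih

theorem nextChain (h : IsBoolNext φ) (n : ℕ) : IsBoolNext (_root_.nextChain φ n) := by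
  induction n with
  | zero => exact h
  | succ n ih => exact .and ih (h.nextPow _)

theorem buntilTerm (h₁ : IsBoolNext φ) (h₂ : IsBoolNext ψ) (n : ℕ) :
    IsBoolNext (_root_.buntilTerm φ ψ n) := by
  cases n with
  | zero => exact h₂
  | succ n => exact .and (h₂.nextPow _) (h₁.nextChain _)

theorem foldl_or {l : List (Formula α)} (hl : ∀ χ ∈ l, IsBoolNext χ) (h : IsBoolNext φ) :
    IsBoolNext (l.foldl .or φ) := by
  induction l generalizing φ with
  | nil => exact h
  | cons χ l ih =>
    exact ih (fun χ' hχ' => hl χ' (List.mem_cons_of_mem _ hχ'))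
      (.or h (hl χ List.mem_cons_self))

theorem buntil (h₁ : IsBoolNext φ) (h₂ : IsBoolNext ψ) (a b : ℕ) :
    IsBoolNext (_root_.buntil a b φ ψ) := by
  refine foldl_or ?_ (h₁.buntilTerm h₂ a)
  simp only [List.mem_map]
  rintro _ ⟨n, -, rfl⟩
  exact h₁.buntilTerm h₂ n

theorem sat_iff {σ τ : ℕ → Set α} {t t' : ℕ} (h : IsBoolNext φ)
    (hw : ∀ r ≤ nextDepth φ, σ (t + r) = τ (t' + r)) : Sat σ φ t ↔ Sat τ φ t' := by
  induction h generalizing t t' with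
  | atom p =>
    have hp := hw 0 le_rfl
    simp only [Nat.add_zero] at hp
    simp only [Sat, hp]
  | not _ ih => exact not_congr (ih hw)
  | or _ _ ih₁ ih₂ =>
    exact or_congr (ih₁ fun r hr => hw r (le_max_of_le_left hr))
      (ih₂ fun r hr => hw r (le_max_of_le_right hr))
  | and _ _ ih₁ ih₂ =>
    exact and_congr (ih₁ fun r hr => hw r (le_max_of_le_left hr))
      (ih₂ fun r hr => hw r (le_max_of_le_right hr))
  | next _ ih =>
    refine ih fun r hr => ?_
    simpa only [Nat.add_right_comm _ 1 r, Nat.add_assoc] using hw (r + 1) (by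
      simp only [nextDepth]; omega)

end IsBoolNext

def SatOn (σ : ℕ → Set α) (φ : Formula α) (i m : ℕ) : Prop :=
  ∀ j, i ≤ j → j ≤ m → Sat σ φ j

section SatOn

variable {σ : ℕ → Set α} {φ ψ θ : Formula α} {i m : ℕ}

theorem satOn_self_iff : SatOn σ φ i i ↔ Sat σ φ i :=
  ⟨fun h => h i le_rfl le_rfl, fun h _ h₁ h₂ => le_antisymm h₂ h₁ ▸ h⟩

theorem satOn_and_iff : SatOn σ (.and φ ψ) i m ↔ SatOn σ φ i m ∧ SatOn σ ψ i m :=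
  ⟨fun h => ⟨fun j h₁ h₂ => (h j h₁ h₂).1, fun j h₁ h₂ => (h j h₁ h₂).2⟩,
    fun h j h₁ h₂ => ⟨h.1 j h₁ h₂, h.2 j h₁ h₂⟩⟩

theorem satOn_next_iff : SatOn σ (.next φ) i m ↔ SatOn σ φ (i + 1) (m + 1) := by
  refine ⟨fun h j h₁ h₂ => ?_, fun h j h₁ h₂ => h (j + 1) (by omega) (by omega)⟩
  obtain ⟨j, rfl⟩ : ∃ j', j = j' + 1 := ⟨j - 1, by omega⟩
  exact h j (by omega) (by omega)

theorem satOn_glob_iff (him : i ≤ m) : SatOn σ (.glob φ) i m ↔ Sat σ (.glob φ) i :=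
  ⟨fun h => h i le_rfl him, fun h _ h₁ _ k hk => h k (h₁.trans hk)⟩

theorem satOn_rels_iff (him : i ≤ m) : SatOn σ (.rels θ φ) i m ↔
    Sat σ (.glob φ) i ∨ ∃ n, m ≤ n ∧ Sat σ θ n ∧ SatOn σ φ i n := by
  have hφ : SatOn σ (.rels θ φ) i m → SatOn σ φ i m := fun h j h₁ h₂ =>
    (h j h₁ h₂).elim (fun hG => hG j le_rfl) fun ⟨_, hn, _, hφ⟩ => hφ j le_rfl hn
  constructor
  · intro h
    rcases h m him le_rfl with hG | ⟨n, hmn, hθ, hφn⟩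
    · left
      intro j hj
      rcases le_total j m with hjm | hmj
      · exact hφ h j hj hjm
      · exact hG j hmj
    · right
      refine ⟨n, hmn, hθ, fun j h₁ h₂ => ?_⟩
      rcases le_total j m with hjm | hmj
      · exact hφ h j h₁ hjm
      · exact hφn j hmj h₂
  · rintro (hG | ⟨n, hmn, hθ, hφn⟩) j h₁ h₂
    · exact Or.inl fun k hk => hG k (h₁.trans hk)
    · exact Or.inr ⟨n, h₂.trans hmn, hθ, fun k hk₁ hk₂ => hφn k (h₁.trans hk₁) hk₂⟩

theorem sat_glob_and_iff :
    Sat σ (.glob (.and φ ψ)) i ↔ Sat σ (.glob φ) i ∧ Sat σ (.glob ψ) i :=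
  ⟨fun h => ⟨fun j hj => (h j hj).1, fun j hj => (h j hj).2⟩,
    fun h j hj => ⟨h.1 j hj, h.2 j hj⟩⟩

theorem sat_glob_next_iff : Sat σ (.glob (.next φ)) i ↔ Sat σ (.glob φ) (i + 1) := by
  refine ⟨fun h j hj => ?_, fun h j hj => h (j + 1) (by omega)⟩
  obtain ⟨j, rfl⟩ : ∃ j', j = j' + 1 := ⟨j - 1, by omega⟩
  exact h j (by omega)

theorem sat_glob_glob_iff : Sat σ (.glob (.glob φ)) i ↔ Sat σ (.glob φ) i :=
  ⟨fun h => h i le_rfl, fun h _ hj k hk => h k (hj.trans hk)⟩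

theorem sat_glob_rels_iff : Sat σ (.glob (.rels θ φ)) i ↔ Sat σ (.glob φ) i :=
  ⟨fun h j hj => (h j hj).elim (fun hG => hG j le_rfl) fun ⟨_, hn, _, hφ⟩ => hφ j le_rfl hn,
    fun h _ hj => Or.inl fun k hk => h k (hj.trans hk)⟩

end SatOn

end Formula

theorem BFLayer.isBoolNext {α : Type} {φ : Formula α}
    (h : BFLayer (fun ψ => ∃ p, ψ = atom p) φ) : IsBoolNext φ := by
  induction h with
  | base hb => obtain ⟨p, rfl⟩ := hb; exact .atom p
  | not _ ih => exact .not ih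
  | or _ _ ih₁ ih₂ => exact .or ih₁ ih₂
  | next _ ih => exact .next ih
  | bu a b _ _ ih₁ ih₂ => exact ih₁.buntil ih₂ a b

def goodWord (D : ℕ) : ℕ → Set PP := sig D D (2 * D + 1)

def badWord (D : ℕ) : ℕ → Set PP := sig D (4 * D + 3) (2 * D + 1)

section Words

variable {D : ℕ}

theorem goodWord_eq_badWord {x : ℕ} (hx : x ≠ 4 * D + 3) : goodWord D x = badWord D x := by
  simp only [goodWord, badWord, sig]
  split_ifs <;> first | rfl | omega

theorem badWord_eq_goodWord_sub {x : ℕ} (h₁ : 3 * D + 3 ≤ x) (h₂ : x ≤ 5 * D + 3) :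
    badWord D x = goodWord D (x - (3 * D + 3)) := by
  simp only [goodWord, badWord, sig]
  split_ifs <;> first | rfl | omega

theorem goodWord_eq_of_lt {x y : ℕ} (hx : 2 * D + 1 < x) (hy : 2 * D + 1 < y) :
    goodWord D x = goodWord D y := by
  simp only [goodWord, sig]
  split_ifs <;> first | rfl | omega

theorem goodWord_mem_lang_phiG (D : ℕ) : goodWord D ∈ Lang phiG := by
  intro j _
  simp only [Sat, goodWord, sig]
  by_cases hj : j = 2 * D + 1
  · refine Or.inr fun k hk => ?_
    split_ifs <;> first | omega | simp
  · left
    split_ifs <;> simp_all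

theorem badWord_not_mem_lang_phiG (D : ℕ) : badWord D ∉ Lang phiG := by
  intro h
  have h₁ : Sat (badWord D) (.or (.atom PP.p1) (.glob (.atom PP.p2))) (2 * D + 1) :=
    h (2 * D + 1) (Nat.zero_le _)
  simp only [Sat, badWord, sig] at h₁
  rcases h₁ with h₁ | h₁
  · split_ifs at h₁ <;> first | omega | simp at h₁
  · have h₂ := h₁ (4 * D + 3) (by omega)
    split_ifs at h₂ <;> first | omega | simp at h₂

end Words

/-- `k` is an upper bound on the look-ahead of `φ`. -/
structure Transfers (D k : ℕ) (φ : Formula PP) : Prop where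
  satOn : ∀ i m, i ≤ m → i + k ≤ D → m + k ≤ 3 * D + 2 →
    SatOn (goodWord D) φ i m → SatOn (badWord D) φ i m
  sat_glob : ∀ i, i + k ≤ D → Sat (goodWord D) (.glob φ) i → Sat (badWord D) (.glob φ) i

namespace Transfers

variable {D k : ℕ} {φ ψ θ : Formula PP}

theorem mono {k' : ℕ} (h : Transfers D k φ) (hk : k ≤ k') : Transfers D k' φ :=
  ⟨fun i m him hi hm => h.satOn i m him (by omega) (by omega),
    fun i hi => h.sat_glob i (by omega)⟩

theorem of_isBoolNext (h : IsBoolNext φ) : Transfers D (nextDepth φ) φ := by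
  refine ⟨fun i m _ _ hm hg j h₁ h₂ => ?_, fun i hi hg j hj => ?_⟩
  · exact (h.sat_iff fun r hr => goodWord_eq_badWord (by omega)).1 (hg j h₁ h₂)
  · by_cases hN : j ≤ 4 * D + 3 ∧ 4 * D + 3 ≤ j + nextDepth φ
    · -- near the extra `p₁` of `badWord D`, compare with `goodWord D` around its `p₁` at `D`
      refine (h.sat_iff fun r hr => ?_).1 (hg (j - (3 * D + 3)) (by omega))
      rw [badWord_eq_goodWord_sub (by omega) (by omega)]
      congr 1
      omega
    · exact (h.sat_iff fun r hr => goodWord_eq_badWord (by omega)).1 (hg j hj)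

theorem and (h₁ : Transfers D k φ) (h₂ : Transfers D k ψ) : Transfers D k (.and φ ψ) := by
  refine ⟨fun i m him hi hm hg => ?_, fun i hi hg => ?_⟩
  · rw [satOn_and_iff] at hg ⊢
    exact ⟨h₁.satOn i m him hi hm hg.1, h₂.satOn i m him hi hm hg.2⟩
  · rw [sat_glob_and_iff] at hg ⊢
    exact ⟨h₁.sat_glob i hi hg.1, h₂.sat_glob i hi hg.2⟩

theorem next (h : Transfers D k φ) : Transfers D (k + 1) (.next φ) := by
  refine ⟨fun i m him hi hm hg => ?_, fun i hi hg => ?_⟩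
  · rw [satOn_next_iff] at hg ⊢
    exact h.satOn (i + 1) (m + 1) (by omega) (by omega) (by omega) hg
  · rw [sat_glob_next_iff] at hg ⊢
    exact h.sat_glob (i + 1) (by omega) hg

theorem glob (h : Transfers D k φ) : Transfers D k (.glob φ) := by
  refine ⟨fun i m him hi _ hg => ?_, fun i hi hg => ?_⟩
  · rw [satOn_glob_iff him] at hg ⊢
    exact h.sat_glob i hi hg
  · rw [sat_glob_glob_iff] at hg ⊢
    exact h.sat_glob i hi hg

theorem rels (h : Transfers D k φ) (hθ : IsBoolNext θ) :
    Transfers D (max (nextDepth θ) k) (.rels θ φ) := by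
  refine ⟨fun i m him hi hm hg => ?_, fun i hi hg => ?_⟩
  · rw [satOn_rels_iff him] at hg ⊢
    rcases hg with hG | ⟨n, hmn, hθn, hφn⟩
    · exact Or.inl (h.sat_glob i (by omega) hG)
    · by_cases hn : n + k ≤ 3 * D + 2
      · refine Or.inr ⟨n, hmn, ?_, h.satOn i n (by omega) (by omega) hn hφn⟩
        exact (hθ.sat_iff fun r hr => goodWord_eq_badWord (by omega)).1 hθn
      · -- `goodWord D` is constant beyond `2D+1`, so the witness can be moved back to `M`
        set M := 3 * D + 2 - k
        refine Or.inr ⟨M, by omega, (hθ.sat_iff fun r hr => ?_).1 hθn,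
          h.satOn i M (by omega) (by omega) (by omega) fun j h₁ h₂ => hφn j h₁ (by omega)⟩
        rw [goodWord_eq_of_lt (y := M + r) (by omega) (by omega), goodWord_eq_badWord (by omega)]
  · rw [sat_glob_rels_iff] at hg ⊢
    exact h.sat_glob i (by omega) hg

end Transfers

theorem FLayer.exists_transfers {φ : Formula PP}
    (h : FLayer (fun ψ => ∃ p, ψ = atom p) φ) : ∃ k, ∀ D, Transfers D k φ := by
  induction h with
  | @bf φ hφ => exact ⟨nextDepth φ, fun _ => .of_isBoolNext hφ.isBoolNext⟩
  | and _ _ ih₁ ih₂ =>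
    obtain ⟨k₁, h₁⟩ := ih₁
    obtain ⟨k₂, h₂⟩ := ih₂
    exact ⟨max k₁ k₂, fun D =>
      ((h₁ D).mono (le_max_left _ _)).and ((h₂ D).mono (le_max_right _ _))⟩
  | next _ ih =>
    obtain ⟨k, h⟩ := ih
    exact ⟨k + 1, fun D => (h D).next⟩
  | glob _ ih =>
    obtain ⟨k, h⟩ := ih
    exact ⟨k, fun D => (h D).glob⟩
  | @rels θ _ hθ _ ih =>
    obtain ⟨k, h⟩ := ih
    exact ⟨max (nextDepth θ) k, fun D => (h D).rels hθ.isBoolNext⟩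

theorem IsLTLEBR.exists_sat_badWord_of_sat_goodWord {χ : Formula PP} (h : IsLTLEBR χ) :
    ∃ k, ∀ D, k ≤ D → Sat (goodWord D) χ 0 → Sat (badWord D) χ 0 := by
  induction h with
  | f hφ =>
    obtain ⟨k, hk⟩ := hφ.exists_transfers
    refine ⟨k, fun D hD hg => ?_⟩
    rw [← satOn_self_iff] at hg ⊢
    exact (hk D).satOn 0 0 le_rfl (by omega) (by omega) hg
  | or _ _ ih₁ ih₂ =>
    obtain ⟨k₁, h₁⟩ := ih₁
    obtain ⟨k₂, h₂⟩ := ih₂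
    exact ⟨max k₁ k₂, fun D hD => Or.imp (h₁ D (le_of_max_le_left hD))
      (h₂ D (le_of_max_le_right hD))⟩
  | and _ _ ih₁ ih₂ =>
    obtain ⟨k₁, h₁⟩ := ih₁
    obtain ⟨k₂, h₂⟩ := ih₂
    exact ⟨max k₁ k₂, fun D hD => And.imp (h₁ D (le_of_max_le_left hD))
      (h₂ D (le_of_max_le_right hD))⟩

/-- `G(p₁ ∨ G p₂)` is not definable in LTLEBR. -/
theorem phiG_not_definable_in_ltlebr :
    ¬ ∃ ψ : Formula PP, IsLTLEBR ψ ∧ Lang ψ = Lang phiG := by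
  rintro ⟨ψ, hψ, hlang⟩
  obtain ⟨k, hk⟩ := hψ.exists_sat_badWord_of_sat_goodWord
  have hgood : goodWord k ∈ Lang ψ := hlang ▸ goodWord_mem_lang_phiG k
  exact badWord_not_mem_lang_phiG k (hlang ▸ hk k le_rfl hgood)
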